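/- Let f : ℝⁿ → ℝ be twice continuously differentiable and convex, with each partial derivative uniformly Lipschitz along its own coordinate with common constant L_max > 0 (i.e. |∂ᵢf(x + t eᵢ) − ∂ᵢf(x)| ≤ L_max·|t| for all x ∈ ℝⁿ, t ∈ ℝ, i ∈ {1,…,n}). Let x* be a global minimizer of f with f* = f(x*), and suppose that for every x with f(x) ≤ f(x₀) one has ‖x − x*‖ ≤ R₀. Let (iₖ)ₖ be i.i.d. indices uniformly distributed on {1,…,n} and define the randomized coordinate descent iterates x₀ ∈ ℝⁿ, x_{k+1} = x_k − (1/L_max)·∂_{i_k}f(x_k)·e_{i_k}. Then for every k ≥ 1, the expectation over the random indices satisfies E[f(x_k)] − f* ≤ 2 n L_max R₀² / k. -/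

import Mathlib

open scoped BigOperators

/-- The `i`-th partial derivative of `f` at `x`, i.e. `[∇f(x)]ᵢ`. -/
noncomputable def partialDeriv' {n : ℕ} (f : EuclideanSpace ℝ (Fin n) → ℝ)
    (x : EuclideanSpace ℝ (Fin n)) (i : Fin n) : ℝ :=
  fderiv ℝ f x (EuclideanSpace.single i 1)

/-- One coordinate gradient step with step size `1/L` along coordinate `i`:
`x ↦ x − (1/L)·∂ᵢf(x)·eᵢ`. -/
noncomputable def cdStep {n : ℕ} (f : EuclideanSpace ℝ (Fin n) → ℝ) (L : ℝ)
    (x : EuclideanSpace ℝ (Fin n)) (i : Fin n) : EuclideanSpace ℝ (Fin n) :=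
  x - (partialDeriv' f x i / L) • EuclideanSpace.single i 1

/-- The randomized coordinate descent iterates driven by the index sequence `ω`:
`x₀` is given, and `x_{k+1} = x_k − (1/L)·∂_{ω k}f(x_k)·e_{ω k}`. -/
noncomputable def cdIter {n : ℕ} (f : EuclideanSpace ℝ (Fin n) → ℝ) (L : ℝ)
    (x₀ : EuclideanSpace ℝ (Fin n)) (ω : ℕ → Fin n) : ℕ → EuclideanSpace ℝ (Fin n)
  | 0 => x₀
  | k + 1 => cdStep f L (cdIter f L x₀ ω k) (ω k)

/-!
Along the line through `x` in direction `eᵢ`, the coordinatewise Lipschitz bound gives the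
quadratic model `f (x + t eᵢ) ≤ f x + ∂ᵢf(x) t + L t² / 2`, so the step `t = -∂ᵢf(x) / L`
decreases `f` by at least `(∂ᵢf x)² / (2L)`. Averaging over the uniform index,
`E f(x_{k+1}) ≤ E f(x_k) - E ‖∇f(x_k)‖² / (2nL)`. The iterates never leave the sublevel set
of `x₀`, where convexity gives `f x - f* ≤ ⟪∇f x, x - x*⟫ ≤ R₀ ‖∇f x‖`; squaring and applying
Jensen, the expected gap `a_k` satisfies `a_k² ≤ 2nLR₀² (a_k - a_{k+1})`, and every nonnegative
sequence with this property has `k a_k ≤ 2nLR₀²`.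
-/

open Set Finset InnerProductSpace

theorem image_le_add_mul_add_sq_of_abs_deriv_sub_le {g g' : ℝ → ℝ} {L : ℝ}
    (hg : ∀ t, HasDerivAt g (g' t) t) (hg' : ∀ t, |g' t - g' 0| ≤ L * |t|) (t : ℝ) :
    g t ≤ g 0 + g' 0 * t + L / 2 * t ^ 2 := by
  -- the gap `φ` between the quadratic model and `g` vanishes at `0`, and `φ' s` has the sign of `s`
  set φ : ℝ → ℝ := fun s => g 0 + g' 0 * s + L / 2 * s ^ 2 - g s
  have hφ : ∀ s, HasDerivAt φ (g' 0 + L * s - g' s) s := fun s => by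
    refine (((((hasDerivAt_id s).const_mul (g' 0)).const_add (g 0)).add
      ((hasDerivAt_pow 2 s).const_mul (L / 2))).sub (hg s)).congr_deriv ?_
    simp only [mul_one, Nat.cast_ofNat]
    ring
  have hcont : Continuous φ := continuous_iff_continuousAt.2 fun s => (hφ s).continuousAt
  suffices 0 ≤ φ t by simp only [φ] at this; linarith
  have hφ0 : φ 0 = 0 := by simp [φ]
  rcases le_total 0 t with ht | ht
  · have hmono : MonotoneOn φ (Ici 0) := by
      refine monotoneOn_of_hasDerivWithinAt_nonneg (convex_Ici 0) hcont.continuousOn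
        (fun s _ => (hφ s).hasDerivWithinAt) fun s hs => ?_
      rw [interior_Ici, Set.mem_Ioi] at hs
      have := (abs_le.1 (hg' s)).2
      rw [abs_of_pos hs] at this
      linarith
    simpa [hφ0] using hmono self_mem_Ici ht ht
  · have hanti : AntitoneOn φ (Iic 0) := by
      refine antitoneOn_of_hasDerivWithinAt_nonpos (convex_Iic 0) hcont.continuousOn
        (fun s _ => (hφ s).hasDerivWithinAt) fun s hs => ?_
      rw [interior_Iic, Set.mem_Iio] at hs
      have := (abs_le.1 (hg' s)).1
      rw [abs_of_neg hs] at this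
      linarith
    simpa [hφ0] using hanti ht self_mem_Iic ht

theorem ConvexOn.add_fderiv_sub_le {E : Type*} [NormedAddCommGroup E] [NormedSpace ℝ E]
    {f : E → ℝ} (hf : ConvexOn ℝ univ f) {x : E} (hx : DifferentiableAt ℝ f x) (y : E) :
    f x + fderiv ℝ f x (y - x) ≤ f y := by
  have hline : ConvexOn ℝ univ (f ∘ AffineMap.lineMap (k := ℝ) x y) := by
    simpa using hf.comp_affineMap (AffineMap.lineMap (k := ℝ) x y)
  have hderiv : HasDerivAt (f ∘ AffineMap.lineMap (k := ℝ) x y) (fderiv ℝ f x (y - x)) 0 :=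
    hx.hasFDerivAt.comp_hasDerivAt_of_eq 0 AffineMap.hasDerivAt_lineMap
      (AffineMap.lineMap_apply_zero x y).symm
  have := hline.le_slope_of_hasDerivAt (mem_univ 0) (mem_univ 1) one_pos hderiv
  simp only [slope_def_field, Function.comp_apply, AffineMap.lineMap_apply_zero,
    AffineMap.lineMap_apply_one, sub_zero, div_one] at this
  linarith

theorem ConvexOn.sub_le_norm_gradient_mul {F : Type*} [NormedAddCommGroup F]
    [InnerProductSpace ℝ F] [CompleteSpace F] {f : F → ℝ} (hf : ConvexOn ℝ univ f) {x : F}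
    (hx : DifferentiableAt ℝ f x) (y : F) : f x - f y ≤ ‖gradient f x‖ * ‖x - y‖ := by
  have h := hf.add_fderiv_sub_le hx y
  rw [← toDual_gradient, toDual_apply_apply] at h
  have : ⟪gradient f x, x - y⟫_ℝ = -⟪gradient f x, y - x⟫_ℝ := by
    rw [← inner_neg_right, neg_sub]
  linarith [real_inner_le_norm (gradient f x) (x - y)]

theorem sq_expect_le_expect_sq {ι : Type*} [Fintype ι] [Nonempty ι] (a : ι → ℝ) :
    (𝔼 j, a j) ^ 2 ≤ 𝔼 j, a j ^ 2 := by
  simpa using expect_mul_sq_le_sq_mul_sq univ a 1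

theorem ConvexOn.sq_expect_sub_le {F ι : Type*} [NormedAddCommGroup F] [InnerProductSpace ℝ F]
    [CompleteSpace F] [Fintype ι] [Nonempty ι] {f : F → ℝ} (hf : ConvexOn ℝ univ f)
    (hfd : Differentiable ℝ f) {xstar : F} (hmin : ∀ y, f xstar ≤ f y) {R : ℝ} (p : ι → F)
    (hp : ∀ j, ‖p j - xstar‖ ≤ R) :
    (𝔼 j, f (p j) - f xstar) ^ 2 ≤ R ^ 2 * 𝔼 j, ‖gradient f (p j)‖ ^ 2 := by
  have hpoint : ∀ j, (f (p j) - f xstar) ^ 2 ≤ R ^ 2 * ‖gradient f (p j)‖ ^ 2 := fun j => by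
    have hgap : f (p j) - f xstar ≤ ‖gradient f (p j)‖ * R :=
      (hf.sub_le_norm_gradient_mul (hfd (p j)) xstar).trans (by gcongr; exact hp j)
    rw [← mul_pow, mul_comm]
    exact pow_le_pow_left₀ (sub_nonneg.2 (hmin _)) hgap 2
  calc (𝔼 j, f (p j) - f xstar) ^ 2 = (𝔼 j, (f (p j) - f xstar)) ^ 2 := by
        rw [expect_sub_distrib, Fintype.expect_const]
    _ ≤ 𝔼 j, (f (p j) - f xstar) ^ 2 := sq_expect_le_expect_sq _
    _ ≤ 𝔼 j, R ^ 2 * ‖gradient f (p j)‖ ^ 2 := expect_le_expect fun j _ => hpoint j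
    _ = R ^ 2 * 𝔼 j, ‖gradient f (p j)‖ ^ 2 := (mul_expect _ _ _).symm

theorem Fintype.expect_pi_fin_succ {α M : Type*} [Fintype α] [AddCommMonoid M] [Module ℚ≥0 M]
    {k : ℕ} (φ : (Fin (k + 1) → α) → M) :
    𝔼 τ, φ τ = 𝔼 σ : Fin k → α, 𝔼 a, φ (Fin.snoc σ a) := by
  rw [← Fintype.expect_equiv (Fin.snocEquiv fun _ => α) (fun p => φ (Fin.snoc p.2 p.1)) φ
    (fun _ => rfl), ← univ_product_univ, expect_product, expect_comm]

theorem natCast_mul_le_of_sq_le_mul_sub {a : ℕ → ℝ} {C : ℝ} (hC : 0 ≤ C) (ha : ∀ k, 0 ≤ a k)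
    (h : ∀ k, a k ^ 2 ≤ C * (a k - a (k + 1))) (k : ℕ) : k * a k ≤ C := by
  have hle : ∀ k, a k ≤ C := fun k => by nlinarith [h k, ha k, ha (k + 1)]
  induction k with
  | zero => simpa using hC
  | succ k ih =>
    push_cast
    rcases hC.eq_or_lt with rfl | hC
    · simp [le_antisymm (hle (k + 1)) (ha (k + 1))]
    -- `C² - (k + 1)(C a - a²) = (C - k a)(C - a) + a²` with `a = a k`
    have key : (k + 1) * (C * a k - a k ^ 2) ≤ C ^ 2 := by
      nlinarith [mul_nonneg (sub_nonneg.2 ih) (sub_nonneg.2 (hle k)), sq_nonneg (a k)]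
    nlinarith [h k]

section CoordinateDescent

variable {n : ℕ} {f : EuclideanSpace ℝ (Fin n) → ℝ} {L : ℝ}

def CoordLipschitz (f : EuclideanSpace ℝ (Fin n) → ℝ) (L : ℝ) : Prop :=
  ∀ (x : EuclideanSpace ℝ (Fin n)) (t : ℝ) (i : Fin n),
    |partialDeriv' f (x + t • EuclideanSpace.single i 1) i - partialDeriv' f x i| ≤ L * |t|

theorem partialDeriv'_eq_gradient (f : EuclideanSpace ℝ (Fin n) → ℝ)
    (x : EuclideanSpace ℝ (Fin n)) (i : Fin n) : partialDeriv' f x i = gradient f x i := by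
  rw [partialDeriv', ← toDual_gradient, toDual_apply_apply, EuclideanSpace.inner_single_right]
  simp

theorem sum_partialDeriv'_sq_eq_norm_gradient_sq (f : EuclideanSpace ℝ (Fin n) → ℝ)
    (x : EuclideanSpace ℝ (Fin n)) :
    ∑ i, partialDeriv' f x i ^ 2 = ‖gradient f x‖ ^ 2 := by
  simp [EuclideanSpace.real_norm_sq_eq, partialDeriv'_eq_gradient]

theorem CoordLipschitz.apply_add_smul_single_le (hf : Differentiable ℝ f)
    (h : CoordLipschitz f L) (x : EuclideanSpace ℝ (Fin n)) (i : Fin n) (t : ℝ) :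
    f (x + t • EuclideanSpace.single i 1) ≤ f x + partialDeriv' f x i * t + L / 2 * t ^ 2 := by
  have hline : ∀ s : ℝ, HasDerivAt (fun s : ℝ => f (x + s • EuclideanSpace.single i 1))
      (partialDeriv' f (x + s • EuclideanSpace.single i 1) i) s := fun s =>
    (hf _).hasFDerivAt.comp_hasDerivAt s
      ((((hasDerivAt_id s).smul_const _).const_add x).congr_deriv (one_smul _ _))
  simpa using image_le_add_mul_add_sq_of_abs_deriv_sub_le hline (by simpa using h x · i) t

theorem CoordLipschitz.apply_cdStep_le (hf : Differentiable ℝ f) (h : CoordLipschitz f L)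
    (x : EuclideanSpace ℝ (Fin n)) (i : Fin n) :
    f (cdStep f L x i) ≤ f x - partialDeriv' f x i ^ 2 / (2 * L) := by
  rcases eq_or_ne L 0 with rfl | hL
  · simp [cdStep]
  have := h.apply_add_smul_single_le hf x i (-(partialDeriv' f x i / L))
  rw [cdStep, sub_eq_add_neg, ← neg_smul]
  convert this using 1
  field_simp
  ring

theorem CoordLipschitz.antitone_cdIter (hf : Differentiable ℝ f) (h : CoordLipschitz f L)
    (hL : 0 ≤ L) (x₀ : EuclideanSpace ℝ (Fin n)) (ω : ℕ → Fin n) :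
    Antitone fun k => f (cdIter f L x₀ ω k) :=
  antitone_nat_of_succ_le fun k =>
    (h.apply_cdStep_le hf _ _).trans (sub_le_self _ (by positivity))

theorem CoordLipschitz.expect_apply_cdStep_le [NeZero n] (hf : Differentiable ℝ f)
    (h : CoordLipschitz f L) (x : EuclideanSpace ℝ (Fin n)) :
    𝔼 i, f (cdStep f L x i) ≤ f x - ‖gradient f x‖ ^ 2 / (2 * n * L) := by
  calc 𝔼 i, f (cdStep f L x i) ≤ 𝔼 i, (f x - partialDeriv' f x i ^ 2 / (2 * L)) :=
        expect_le_expect fun i _ => h.apply_cdStep_le hf x i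
    _ = f x - ‖gradient f x‖ ^ 2 / (2 * n * L) := by
        rw [expect_sub_distrib, Fintype.expect_const, Fintype.expect_eq_sum_div_card,
          ← sum_div, sum_partialDeriv'_sq_eq_norm_gradient_sq, Fintype.card_fin, div_div]
        ring

/-- The `k`-th iterate as a function of the first `k` indices; the padding index `d` is never
read (see `cdIter_congr`). -/
noncomputable def cdIterFin (f : EuclideanSpace ℝ (Fin n) → ℝ) (L : ℝ)
    (x₀ : EuclideanSpace ℝ (Fin n)) (d : Fin n) {k : ℕ} (σ : Fin k → Fin n) :
    EuclideanSpace ℝ (Fin n) :=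
  cdIter f L x₀ (fun j => if h : j < k then σ ⟨j, h⟩ else d) k

theorem cdIter_congr {x₀ : EuclideanSpace ℝ (Fin n)} {ω ω' : ℕ → Fin n} {k : ℕ}
    (h : ∀ j < k, ω j = ω' j) : cdIter f L x₀ ω k = cdIter f L x₀ ω' k := by
  induction k with
  | zero => rfl
  | succ k ih =>
    simp only [cdIter]
    rw [ih fun j hj => h j (hj.trans k.lt_succ_self), h k k.lt_succ_self]

theorem cdIterFin_snoc (x₀ : EuclideanSpace ℝ (Fin n)) (d : Fin n) {k : ℕ}
    (σ : Fin k → Fin n) (i : Fin n) :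
    cdIterFin f L x₀ d (Fin.snoc σ i : Fin (k + 1) → Fin n) =
      cdStep f L (cdIterFin f L x₀ d σ) i := by
  simp only [cdIterFin, cdIter, dif_pos k.lt_succ_self]
  congr 1
  · refine cdIter_congr fun j hj => ?_
    rw [dif_pos (hj.trans k.lt_succ_self), dif_pos hj]
    exact Fin.snoc_castSucc (α := fun _ => Fin n) (p := σ) (i := ⟨j, hj⟩) i
  · exact Fin.snoc_last (α := fun _ => Fin n) i σ

theorem CoordLipschitz.expect_apply_cdIterFin_succ_le [NeZero n] (hf : Differentiable ℝ f)
    (h : CoordLipschitz f L) (x₀ : EuclideanSpace ℝ (Fin n)) (d : Fin n) (k : ℕ) :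
    𝔼 τ : Fin (k + 1) → Fin n, f (cdIterFin f L x₀ d τ) ≤
      𝔼 σ : Fin k → Fin n, f (cdIterFin f L x₀ d σ) -
        (𝔼 σ : Fin k → Fin n, ‖gradient f (cdIterFin f L x₀ d σ)‖ ^ 2) / (2 * n * L) := by
  rw [Fintype.expect_pi_fin_succ]
  simp_rw [cdIterFin_snoc]
  calc _ ≤ 𝔼 σ : Fin k → Fin n, (f (cdIterFin f L x₀ d σ) -
          ‖gradient f (cdIterFin f L x₀ d σ)‖ ^ 2 / (2 * n * L)) :=
        expect_le_expect fun σ _ => h.expect_apply_cdStep_le hf _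
    _ = _ := by rw [expect_sub_distrib, expect_div]

end CoordinateDescent

/-- Randomized coordinate descent on a C², convex `f : ℝⁿ → ℝ` whose partial
derivatives are uniformly `L_max`-Lipschitz along their own coordinates, with minimizer
`x*` and level-set radius bound `R₀` at `x₀`, satisfies for every `k ≥ 1`
`E[f(x_k)] − f* ≤ 2 n L_max R₀² / k`, where the expectation is the uniform average
over all `n^k` choices of the first `k` coordinate indices. -/
theorem randomized_coordinate_descent_sublinear_rate
    {n : ℕ} (hn : 0 < n) (f : EuclideanSpace ℝ (Fin n) → ℝ)
    (hf : ContDiff ℝ 2 f)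
    (hconv : ConvexOn ℝ Set.univ f)
    (Lmax : ℝ) (hL : 0 < Lmax)
    (hLip : ∀ (x : EuclideanSpace ℝ (Fin n)) (t : ℝ) (i : Fin n),
      |partialDeriv' f (x + t • EuclideanSpace.single i 1) i - partialDeriv' f x i| ≤
        Lmax * |t|)
    (xstar : EuclideanSpace ℝ (Fin n)) (hmin : ∀ y, f xstar ≤ f y)
    (x₀ : EuclideanSpace ℝ (Fin n)) (R₀ : ℝ)
    (hR : ∀ x, f x ≤ f x₀ → ‖x - xstar‖ ≤ R₀)
    (k : ℕ) (hk : 1 ≤ k) :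
    ((n : ℝ) ^ k)⁻¹ * (∑ σ : Fin k → Fin n,
        f (cdIter f Lmax x₀ (fun j => if h : j < k then σ ⟨j, h⟩ else ⟨0, hn⟩) k))
      - f xstar ≤ 2 * n * Lmax * R₀ ^ 2 / k := by
  have : NeZero n := ⟨hn.ne'⟩
  have hfd : Differentiable ℝ f := hf.differentiable (by norm_num)
  have hLip : CoordLipschitz f Lmax := hLip
  set x : ∀ {m : ℕ}, (Fin m → Fin n) → EuclideanSpace ℝ (Fin n) := cdIterFin f Lmax x₀ ⟨0, hn⟩
  set a : ℕ → ℝ := fun m => 𝔼 σ : Fin m → Fin n, f (x σ) - f xstar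
  have ha : ∀ m, 0 ≤ a m := fun m => sub_nonneg.2 (le_expect univ_nonempty fun σ _ => hmin _)
  have hdecay : ∀ m, a m ^ 2 ≤ 2 * n * Lmax * R₀ ^ 2 * (a m - a (m + 1)) := fun m => by
    have hgap := hconv.sq_expect_sub_le hfd hmin (fun σ : Fin m → Fin n => x σ) fun σ =>
      hR _ (hLip.antitone_cdIter hfd hL.le x₀ _ m.zero_le)
    have hstep := hLip.expect_apply_cdIterFin_succ_le hfd x₀ ⟨0, hn⟩ m
    have hG : 𝔼 σ : Fin m → Fin n, ‖gradient f (x σ)‖ ^ 2 ≤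
        2 * n * Lmax * (a m - a (m + 1)) := by
      rw [← div_le_iff₀' (by positivity)]
      simp only [a]
      linarith
    calc a m ^ 2 ≤ R₀ ^ 2 * 𝔼 σ : Fin m → Fin n, ‖gradient f (x σ)‖ ^ 2 := hgap
      _ ≤ R₀ ^ 2 * (2 * n * Lmax * (a m - a (m + 1))) := by gcongr
      _ = _ := by ring
  have hak : ((n : ℝ) ^ k)⁻¹ * (∑ σ : Fin k → Fin n,
        f (cdIter f Lmax x₀ (fun j => if h : j < k then σ ⟨j, h⟩ else ⟨0, hn⟩) k))
      - f xstar = a k := by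
    simp [a, x, cdIterFin, Fintype.expect_eq_sum_div_card, div_eq_inv_mul]
  rw [hak, le_div_iff₀ (by exact_mod_cast hk), mul_comm]
  exact natCast_mul_le_of_sq_le_mul_sub (by positivity) ha hdecay k
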